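/- Let d ≥ 1, let h : {−1,1}^d → ℝ satisfy 0 ≤ h(y) ≤ d for all y, let M ≥ 2d, define f(x) = min(M, h(round(x)) + 2M·g(x)), and let λ > 0. Then for every hypercube vertex y ∈ {−1,1}^d, ∫_{B(y,1/8)} exp(−λ f(x)) dx ≥ exp(−3λM/4) · (1/8)^d · vol(B_d(0,1)), where vol(B_d(0,1)) is the Lebesgue volume of the unit ball in ℝ^d. -/

import Mathlib

/-!
On the ball of radius `1/8` around a vertex `y` the rounding map is constant equal to `y`, so
there `f(x) ≤ h(y) + 2M/8 ≤ d + M/4 ≤ 3M/4`. The integrand is therefore at least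
`exp(-3λM/4)` on the ball, whose volume is `(1/8)^d · vol(B_d(0,1))`.
-/

open Real MeasureTheory

/-- The coordinatewise sign vector: `round(x)_i = 1` if `x_i ≥ 0` and `-1` otherwise. -/
noncomputable def rnd {d : ℕ} (x : EuclideanSpace ℝ (Fin d)) : EuclideanSpace ℝ (Fin d) :=
  WithLp.toLp 2 (fun i => if 0 ≤ x i then 1 else -1)

/-- The continuous extension `f(x) = min(M, h(round x) + 2M·‖x - round x‖)` of a
function `h` on the hypercube vertices. -/
noncomputable def fExt {d : ℕ} (h : EuclideanSpace ℝ (Fin d) → ℝ) (M : ℝ)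
    (x : EuclideanSpace ℝ (Fin d)) : ℝ :=
  min M (h (rnd x) + 2 * M * ‖x - rnd x‖)

/-- The hypercube vertex corresponding to a sign pattern `s : Fin d → Bool`. -/
noncomputable def vtx {d : ℕ} (s : Fin d → Bool) : EuclideanSpace ℝ (Fin d) :=
  WithLp.toLp 2 (fun i => if s i then 1 else -1)

open Metric Set

section

variable {d : ℕ}

lemma vtx_apply_eq_one_or_neg_one (s : Fin d → Bool) (i : Fin d) :
    vtx s i = 1 ∨ vtx s i = -1 := by
  by_cases hs : s i <;> simp [vtx, hs]

lemma rnd_eq_vtx_of_mem_closedBall {s : Fin d → Bool} {r : ℝ} (hr : r < 1)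
    {x : EuclideanSpace ℝ (Fin d)} (hx : x ∈ closedBall (vtx s) r) : rnd x = vtx s := by
  ext i
  have hxi : |x i - vtx s i| < 1 := by
    have := PiLp.norm_apply_le (x - vtx s) i
    rw [mem_closedBall_iff_norm] at hx
    simp only [PiLp.sub_apply, Real.norm_eq_abs] at this
    linarith
  rw [abs_lt] at hxi
  rcases vtx_apply_eq_one_or_neg_one s i with hi | hi <;> rw [hi] at hxi ⊢
  · simp [rnd, show 0 ≤ x i by linarith]
  · simp [rnd, show ¬ 0 ≤ x i by linarith]

lemma fExt_eqOn_closedBall_vtx (h : EuclideanSpace ℝ (Fin d) → ℝ) (M : ℝ) (s : Fin d → Bool)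
    {r : ℝ} (hr : r < 1) :
    EqOn (fExt h M) (fun x => min M (h (vtx s) + 2 * M * ‖x - vtx s‖)) (closedBall (vtx s) r) :=
  fun x hx => by simp only [fExt, rnd_eq_vtx_of_mem_closedBall hr hx]

lemma fExt_le_of_mem_closedBall_vtx {h : EuclideanSpace ℝ (Fin d) → ℝ} {M r : ℝ} (hM : 0 ≤ M)
    (hr : r < 1) {s : Fin d → Bool} {x : EuclideanSpace ℝ (Fin d)}
    (hx : x ∈ closedBall (vtx s) r) : fExt h M x ≤ h (vtx s) + 2 * M * r := by
  rw [fExt_eqOn_closedBall_vtx h M s hr hx]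
  refine (min_le_right _ _).trans ?_
  gcongr
  exact mem_closedBall_iff_norm.mp hx

lemma integrableOn_exp_fExt_closedBall_vtx (h : EuclideanSpace ℝ (Fin d) → ℝ) (M lam : ℝ)
    (s : Fin d → Bool) {r : ℝ} (hr : r < 1) :
    IntegrableOn (fun x => Real.exp (-(lam * fExt h M x))) (closedBall (vtx s) r) := by
  have hcont : Continuous fun x : EuclideanSpace ℝ (Fin d) =>
      Real.exp (-(lam * min M (h (vtx s) + 2 * M * ‖x - vtx s‖))) := by fun_prop
  refine (hcont.continuousOn.integrableOn_compact (isCompact_closedBall _ _)).congr_fun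
    (fun x hx => ?_) measurableSet_closedBall
  simp only [fExt_eqOn_closedBall_vtx h M s hr hx]

end

theorem gibbs_vertex_ball_lower_bound_general (d : ℕ)
    (h : EuclideanSpace ℝ (Fin d) → ℝ)
    (hh : ∀ y : EuclideanSpace ℝ (Fin d), (∀ i, y i = 1 ∨ y i = -1) →
      0 ≤ h y ∧ h y ≤ (d : ℝ))
    (M : ℝ) (hM : 2 * (d : ℝ) ≤ M)
    (lam : ℝ) (hlam : 0 < lam) :
    ∀ s : Fin d → Bool,
      Real.exp (-(3 * lam * M / 4)) * (1 / 8 : ℝ) ^ d *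
          (volume (Metric.closedBall (0 : EuclideanSpace ℝ (Fin d)) 1)).toReal ≤
        ∫ x in Metric.closedBall (vtx s) (1 / 8), Real.exp (-(lam * fExt h M x)) := by
  intro s
  have hM0 : 0 ≤ M := le_trans (by positivity) hM
  have hhs : h (vtx s) ≤ d := (hh (vtx s) (vtx_apply_eq_one_or_neg_one s)).2
  have hexp : ∀ x ∈ closedBall (vtx s) (1 / 8),
      Real.exp (-(3 * lam * M / 4)) ≤ Real.exp (-(lam * fExt h M x)) := fun x hx => by
    have hf : fExt h M x ≤ 3 * M / 4 := by
      linarith [fExt_le_of_mem_closedBall_vtx (h := h) hM0 (by norm_num) hx]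
    rw [show 3 * lam * M / 4 = lam * (3 * M / 4) by ring]
    gcongr
  have hint := setIntegral_ge_of_const_le_real measurableSet_closedBall
    measure_closedBall_lt_top.ne hexp (integrableOn_exp_fExt_closedBall_vtx h M lam s (by norm_num))
  rw [Measure.addHaar_real_closedBall' _ _ (by norm_num), finrank_euclideanSpace_fin] at hint
  rw [← measureReal_def, mul_assoc]
  exact hint

/-- Every radius-`1/8` ball around a hypercube vertex carries Gibbs mass
at least `exp(-3λM/4) · (1/8)^d · vol(B_d(0,1))`. -/
theorem gibbs_vertex_ball_lower_bound (d : ℕ) (hd : 1 ≤ d)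
    (h : EuclideanSpace ℝ (Fin d) → ℝ)
    (hh : ∀ y : EuclideanSpace ℝ (Fin d), (∀ i, y i = 1 ∨ y i = -1) →
      0 ≤ h y ∧ h y ≤ (d : ℝ))
    (M : ℝ) (hM : 2 * (d : ℝ) ≤ M)
    (lam : ℝ) (hlam : 0 < lam) :
    ∀ s : Fin d → Bool,
      Real.exp (-(3 * lam * M / 4)) * (1 / 8 : ℝ) ^ d *
          (volume (Metric.closedBall (0 : EuclideanSpace ℝ (Fin d)) 1)).toReal ≤
        ∫ x in Metric.closedBall (vtx s) (1 / 8), Real.exp (-(lam * fExt h M x)) :=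
  gibbs_vertex_ball_lower_bound_general d h hh M hM lam hlam
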